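/- arXiv:1310.1063 — 4 statements merged into one kernel-verified Lean document; each statement's English description precedes it below -/
import Mathlib

section
/- Let d, n ≥ 1 and let Ĵ be the (2d+n)×(2d+n) block matrix [[J, 0],[0, 0]], where J is the 2d×2d block matrix [[0, −I],[I, 0]] with d×d identity blocks I. An invertible real (2d+n)×(2d+n) matrix B satisfies B Ĵ Bᵀ = Ĵ if and only if B has block form [[A, a],[0, b]], where A is a 2d×2d matrix with Aᵀ J A = J (i.e. A is symplectic), a is an arbitrary 2d×n real matrix, and b is an invertible n×n real matrix. -/
/-!
For `B = [[A, a], [c, b]]` the product `B Ĵ Bᵀ` has blocks `A J Aᵀ`, `A J cᵀ`, `c J Aᵀ`, `c J cᵀ`.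
Equality with `Ĵ` in the first block says that `A` is symplectic, which makes `J Aᵀ` invertible,
so `c J Aᵀ = 0` forces `c = 0`; the remaining blocks then vanish automatically. Once `B` is block
upper triangular, `det B = det A · det b` shows that `b` is invertible.
-/

open Matrix

namespace Matrix

variable {l k R : Type*} [Fintype l] [Fintype k] [CommRing R]

theorem fromBlocks_mul_fromBlocks_zero_mul_transpose (A : Matrix l l R) (a : Matrix l k R)
    (c : Matrix k l R) (b : Matrix k k R) (J : Matrix l l R) :
    fromBlocks A a c b * fromBlocks J 0 0 0 * (fromBlocks A a c b)ᵀ =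
      fromBlocks (A * J * Aᵀ) (A * J * cᵀ) (c * J * Aᵀ) (c * J * cᵀ) := by
  simp only [fromBlocks_transpose, fromBlocks_multiply, Matrix.mul_zero, Matrix.zero_mul,
    add_zero]

variable [DecidableEq l]

theorem fromBlocks_mul_fromBlocks_J_zero_mul_transpose_eq_iff (A : Matrix (l ⊕ l) (l ⊕ l) R)
    (a : Matrix (l ⊕ l) k R) (c : Matrix k (l ⊕ l) R) (b : Matrix k k R) :
    fromBlocks A a c b * fromBlocks (J l R) 0 0 0 * (fromBlocks A a c b)ᵀ =
        fromBlocks (J l R) 0 0 0 ↔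
      A ∈ symplecticGroup l R ∧ c = 0 := by
  rw [fromBlocks_mul_fromBlocks_zero_mul_transpose, fromBlocks_inj, SymplecticGroup.mem_iff]
  constructor
  · rintro ⟨hA, -, hc, -⟩
    have hJAT : IsUnit (J l R * Aᵀ).det := by
      rw [det_mul]
      exact (isUnit_det_J l R).mul (SymplecticGroup.symplectic_det
        (SymplecticGroup.transpose_mem (SymplecticGroup.mem_iff.mpr hA)))
    refine ⟨hA, ?_⟩
    rw [← mul_nonsing_inv_cancel_right _ c hJAT, ← Matrix.mul_assoc, hc, Matrix.zero_mul]
  · rintro ⟨hA, rfl⟩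
    simp [hA]

end Matrix

theorem stmt_0_general (d n : ℕ)
    (J : Matrix (Fin d ⊕ Fin d) (Fin d ⊕ Fin d) ℝ)
    (hJ : J = Matrix.fromBlocks 0 (-1) 1 0)
    (Jhat : Matrix ((Fin d ⊕ Fin d) ⊕ Fin n) ((Fin d ⊕ Fin d) ⊕ Fin n) ℝ)
    (hJhat : Jhat = Matrix.fromBlocks J 0 0 0)
    (B : Matrix ((Fin d ⊕ Fin d) ⊕ Fin n) ((Fin d ⊕ Fin d) ⊕ Fin n) ℝ)
    (hB : IsUnit B) :
    B * Jhat * Bᵀ = Jhat ↔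
      ∃ (A : Matrix (Fin d ⊕ Fin d) (Fin d ⊕ Fin d) ℝ)
        (a : Matrix (Fin d ⊕ Fin d) (Fin n) ℝ)
        (b : Matrix (Fin n) (Fin n) ℝ),
        Aᵀ * J * A = J ∧ IsUnit b ∧ B = Matrix.fromBlocks A a 0 b := by
  obtain rfl : J = Matrix.J (Fin d) ℝ := hJ
  obtain ⟨A, a, c, b, rfl⟩ : ∃ A a c b, B = fromBlocks A a c b :=
    ⟨_, _, _, _, (fromBlocks_toBlocks B).symm⟩
  rw [hJhat, fromBlocks_mul_fromBlocks_J_zero_mul_transpose_eq_iff]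
  constructor
  · rintro ⟨hA, rfl⟩
    exact ⟨_, _, _, SymplecticGroup.mem_iff'.mp hA, (isUnit_fromBlocks_zero₂₁.mp hB).2, rfl⟩
  · rintro ⟨A', a', b', hA', -, hB'⟩
    obtain ⟨rfl, -, rfl, -⟩ := fromBlocks_inj.mp hB'
    exact ⟨SymplecticGroup.mem_iff'.mpr hA', rfl⟩

/-- An invertible real `(2d+n)×(2d+n)` matrix `B` satisfies `B Ĵ Bᵀ = Ĵ`
iff it has block form `[[A, a],[0, b]]` with `A` symplectic and `b` invertible. -/
theorem stmt_0 (d n : ℕ) (hd : 1 ≤ d) (hn : 1 ≤ n)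
    (J : Matrix (Fin d ⊕ Fin d) (Fin d ⊕ Fin d) ℝ)
    (hJ : J = Matrix.fromBlocks 0 (-1) 1 0)
    (Jhat : Matrix ((Fin d ⊕ Fin d) ⊕ Fin n) ((Fin d ⊕ Fin d) ⊕ Fin n) ℝ)
    (hJhat : Jhat = Matrix.fromBlocks J 0 0 0)
    (B : Matrix ((Fin d ⊕ Fin d) ⊕ Fin n) ((Fin d ⊕ Fin d) ⊕ Fin n) ℝ)
    (hB : IsUnit B) :
    B * Jhat * Bᵀ = Jhat ↔
      ∃ (A : Matrix (Fin d ⊕ Fin d) (Fin d ⊕ Fin d) ℝ)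
        (a : Matrix (Fin d ⊕ Fin d) (Fin n) ℝ)
        (b : Matrix (Fin n) (Fin n) ℝ),
        Aᵀ * J * A = J ∧ IsUnit b ∧ B = Matrix.fromBlocks A a 0 b :=
  stmt_0_general d n J hJ Jhat hJhat B hB
end

section
/- Let ℓ : ℝ → ℝ be a C¹ function with ℓ(r) = 1 for |r| ≤ 1/4, let α ∈ ℝ and 1 ≤ i ≤ d, and let K_i(x, y, z) = α ℓ(ρ) ρ_i on ℝ^{2d+n}, where ρ = ½‖(x,y,z)‖₂² and ρ_i = ½(x_i² + y_i²). Fix an initial point p = (x, y, z) with ρ(p) ≤ 1/4. Then the curve γ(t) defined by (x_i(t), y_i(t)) = R_{tα}(x_i, y_i) (rotation of the pair (x_i, y_i) by angle tα) and all other coordinates kept equal to those of p, is a solution of γ′ = X_{K_i}(γ) with γ(0) = p, defined for all t ∈ ℝ; in particular ρ(γ(t)) = ρ(p) ≤ 1/4 for all t. -/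
/-!
Rotating the pair `(x_i, y_i)` preserves `ρ`, so the curve stays in `{ρ ≤ 1/4}`, where `ℓ ≡ 1`.
There `ℓ' = 0` (at `ρ = 1/4` too: the one-sided derivative along `[-1/4, 1/4]` determines it),
hence `∇K_i = α ∇ρ_i` and `X_{K_i}` is the infinitesimal rotation `α (-y_i, x_i)`, which is `γ'`.
-/

/-- `ρ(x,y,z) = ½‖(x,y,z)‖₂²` on `ℝ^{2d+n} = ℝ^d × ℝ^d × ℝ^n`. -/
noncomputable def rho {d n : ℕ} (p : (Fin d → ℝ) × (Fin d → ℝ) × (Fin n → ℝ)) : ℝ :=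
  (1 / 2) * (∑ j, p.1 j ^ 2 + ∑ j, p.2.1 j ^ 2 + ∑ k, p.2.2 k ^ 2)

/-- `ρ_i(x,y,z) = ½(x_i² + y_i²)`. -/
noncomputable def rhoI {d n : ℕ} (i : Fin d)
    (p : (Fin d → ℝ) × (Fin d → ℝ) × (Fin n → ℝ)) : ℝ :=
  (1 / 2) * (p.1 i ^ 2 + p.2.1 i ^ 2)

/-- The Hamiltonian vector field `X_K = Ĵ ∇K`, i.e. `ẋ = -∇_y K`, `ẏ = ∇_x K`, `ż = 0`. -/
noncomputable def hamVF {d n : ℕ}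
    (K : (Fin d → ℝ) × (Fin d → ℝ) × (Fin n → ℝ) → ℝ)
    (p : (Fin d → ℝ) × (Fin d → ℝ) × (Fin n → ℝ)) :
    (Fin d → ℝ) × (Fin d → ℝ) × (Fin n → ℝ) :=
  (fun j => -(fderiv ℝ K p (0, Pi.single j 1, 0)),
   fun j => fderiv ℝ K p (Pi.single j 1, 0, 0),
   0)

open Function Real

abbrev PhaseSpace (d n : ℕ) := (Fin d → ℝ) × (Fin d → ℝ) × (Fin n → ℝ)

lemma hasDerivAt_zero_of_eqOn_Icc {f : ℝ → ℝ} {a b c r : ℝ} (hab : a < b)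
    (hr : r ∈ Set.Icc a b) (hf : DifferentiableAt ℝ f r)
    (hc : Set.EqOn f (fun _ => c) (Set.Icc a b)) :
    HasDerivAt f 0 r := by
  have hconst : HasDerivWithinAt f 0 (Set.Icc a b) r :=
    (hasDerivWithinAt_const r _ c).congr_of_mem hc hr
  have hzero := (uniqueDiffOn_Icc hab r hr).eq_deriv _ hf.hasDerivAt.hasDerivWithinAt hconst
  exact hzero ▸ hf.hasDerivAt

lemma HasDerivAt.update {ι : Type*} [Fintype ι] [DecidableEq ι] {f : ℝ → ℝ} {f' t : ℝ}
    (x : ι → ℝ) (i : ι) (hf : HasDerivAt f f' t) :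
    HasDerivAt (fun s => update x i (f s)) (Pi.single i f') t := by
  refine ((hasDerivAt_update x i (f t)).scomp t hf).congr_deriv ?_
  rw [← Pi.single_smul', smul_eq_mul, mul_one]

lemma hasDerivAt_rotation_fst (α x y t : ℝ) :
    HasDerivAt (fun s => cos (s * α) * x - sin (s * α) * y)
      (-(α * (sin (t * α) * x + cos (t * α) * y))) t := by
  have hcos := (hasDerivAt_cos (t * α)).comp t (hasDerivAt_mul_const α)
  have hsin := (hasDerivAt_sin (t * α)).comp t (hasDerivAt_mul_const α)
  exact ((hcos.mul_const x).sub (hsin.mul_const y)).congr_deriv (by ring)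

lemma hasDerivAt_rotation_snd (α x y t : ℝ) :
    HasDerivAt (fun s => sin (s * α) * x + cos (s * α) * y)
      (α * (cos (t * α) * x - sin (t * α) * y)) t := by
  have hcos := (hasDerivAt_cos (t * α)).comp t (hasDerivAt_mul_const α)
  have hsin := (hasDerivAt_sin (t * α)).comp t (hasDerivAt_mul_const α)
  exact ((hsin.mul_const x).add (hcos.mul_const y)).congr_deriv (by ring)

lemma Finset.sum_sq_update {ι : Type*} [Fintype ι] [DecidableEq ι] (f : ι → ℝ) (i : ι) (v : ℝ) :
    ∑ j, update f i v j ^ 2 = ∑ j, f j ^ 2 - f i ^ 2 + v ^ 2 := by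
  simp_rw [apply_update (fun _ x => x ^ 2) f i v]
  rw [Finset.sum_update_of_mem (Finset.mem_univ i),
    Finset.sum_eq_sum_sdiff_singleton_add (Finset.mem_univ i) (fun j => f j ^ 2)]
  ring

section PhaseSpace

variable {d n : ℕ}

noncomputable def coordX (j : Fin d) : PhaseSpace d n →L[ℝ] ℝ :=
  (ContinuousLinearMap.proj j).comp (ContinuousLinearMap.fst ℝ _ _)

noncomputable def coordY (j : Fin d) : PhaseSpace d n →L[ℝ] ℝ :=
  (ContinuousLinearMap.proj j).comp
    ((ContinuousLinearMap.fst ℝ _ _).comp (ContinuousLinearMap.snd ℝ _ _))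

@[simp] lemma coordX_apply (j : Fin d) (v : PhaseSpace d n) : coordX j v = v.1 j := rfl

@[simp] lemma coordY_apply (j : Fin d) (v : PhaseSpace d n) : coordY j v = v.2.1 j := rfl

lemma hamVF_of_hasFDerivAt {K : PhaseSpace d n → ℝ} {q : PhaseSpace d n} {i : Fin d} {a b : ℝ}
    (hK : HasFDerivAt K (a • coordX i + b • coordY i) q) :
    hamVF K q = (Pi.single i (-b), Pi.single i a, 0) := by
  ext j <;> simp [hamVF, hK.fderiv, Pi.single_apply, eq_comm, neg_ite]

lemma hasFDerivAt_rhoI (i : Fin d) (q : PhaseSpace d n) :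
    HasFDerivAt (rhoI i) (q.1 i • coordX i + q.2.1 i • coordY i) q := by
  have hx := (coordX i).hasFDerivAt.fun_mul (coordX (n := n) i).hasFDerivAt (x := q)
  have hy := (coordY i).hasFDerivAt.fun_mul (coordY (n := n) i).hasFDerivAt (x := q)
  refine (((hx.fun_add hy).const_mul (1 / 2 : ℝ)).congr_fderiv ?_).congr_of_eventuallyEq ?_
  · refine ContinuousLinearMap.ext fun v => ?_
    simp only [add_apply, smul_apply, coordX_apply, coordY_apply, smul_eq_mul]
    ring
  · exact .of_eq (funext fun v => by simp [rhoI, sq])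

lemma differentiable_rho : Differentiable ℝ (rho : PhaseSpace d n → ℝ) := by
  unfold rho; fun_prop

lemma rho_nonneg (p : PhaseSpace d n) : 0 ≤ rho p := by
  unfold rho; positivity

lemma hasFDerivAt_mul_rhoI {ℓ : ℝ → ℝ} (α : ℝ) (i : Fin d) {q : PhaseSpace d n}
    (hℓ' : HasDerivAt ℓ 0 (rho q)) (hℓ : ℓ (rho q) = 1) :
    HasFDerivAt (fun p => α * ℓ (rho p) * rhoI i p)
      ((α * q.1 i) • coordX i + (α * q.2.1 i) • coordY i) q := by
  have hcut := (hℓ'.comp_hasFDerivAt q (differentiable_rho q).hasFDerivAt).const_mul α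
  refine (hcut.fun_mul (hasFDerivAt_rhoI i q)).congr_fderiv ?_
  ext v <;> simp [hℓ, mul_assoc]

noncomputable def rotateAt (i : Fin d) (p : PhaseSpace d n) (θ : ℝ) : PhaseSpace d n :=
  (update p.1 i (cos θ * p.1 i - sin θ * p.2.1 i),
   update p.2.1 i (sin θ * p.1 i + cos θ * p.2.1 i), p.2.2)

lemma rotateAt_zero (i : Fin d) (p : PhaseSpace d n) : rotateAt i p 0 = p := by
  simp [rotateAt]

lemma rho_rotateAt (i : Fin d) (p : PhaseSpace d n) (θ : ℝ) : rho (rotateAt i p θ) = rho p := by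
  simp only [rho, rotateAt, Finset.sum_sq_update]
  linear_combination (1 / 2 : ℝ) * (p.1 i ^ 2 + p.2.1 i ^ 2) * sin_sq_add_cos_sq θ

lemma hasDerivAt_rotateAt (i : Fin d) (p : PhaseSpace d n) (α t : ℝ) :
    HasDerivAt (fun s => rotateAt i p (s * α))
      (Pi.single i (-(α * (rotateAt i p (t * α)).2.1 i)),
       Pi.single i (α * (rotateAt i p (t * α)).1 i), 0) t := by
  refine .prodMk ?_ (.prodMk ?_ (hasDerivAt_const t _)) <;> simp only [rotateAt, update_self]
  · exact (hasDerivAt_rotation_fst α _ _ t).update _ i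
  · exact (hasDerivAt_rotation_snd α _ _ t).update _ i

end PhaseSpace

/-- if `ℓ = 1` on `[-1/4, 1/4]` and `ρ(p) ≤ 1/4`, then the curve obtained from
`p` by rotating the pair `(x_i, y_i)` by angle `tα` (all other coordinates fixed) is a
global solution of `γ' = X_{K_i}(γ)` with `γ(0) = p`, and `ρ` is constantly `ρ(p)` along it. -/
theorem stmt_6 (d n : ℕ) (ℓ : ℝ → ℝ) (hℓ : ContDiff ℝ 1 ℓ)
    (hℓ1 : ∀ r : ℝ, |r| ≤ 1 / 4 → ℓ r = 1) (α : ℝ) (i : Fin d)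
    (K : (Fin d → ℝ) × (Fin d → ℝ) × (Fin n → ℝ) → ℝ)
    (hK : K = fun p => α * ℓ (rho p) * rhoI i p)
    (p : (Fin d → ℝ) × (Fin d → ℝ) × (Fin n → ℝ)) (hp : rho p ≤ 1 / 4)
    (γ : ℝ → (Fin d → ℝ) × (Fin d → ℝ) × (Fin n → ℝ))
    (hγ : γ = fun t =>
      (Function.update p.1 i (Real.cos (t * α) * p.1 i - Real.sin (t * α) * p.2.1 i),
       Function.update p.2.1 i (Real.sin (t * α) * p.1 i + Real.cos (t * α) * p.2.1 i),
       p.2.2)) :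
    γ 0 = p ∧
    (∀ t : ℝ, HasDerivAt γ (hamVF K (γ t)) t) ∧
    (∀ t : ℝ, rho (γ t) = rho p ∧ rho (γ t) ≤ 1 / 4) := by
  obtain rfl : γ = fun t => rotateAt i p (t * α) := hγ
  subst hK
  refine ⟨by simp only [zero_mul, rotateAt_zero], fun t => ?_,
    fun t => ⟨rho_rotateAt .., (rho_rotateAt ..).trans_le hp⟩⟩
  have hflat : Set.EqOn ℓ (fun _ => 1) (Set.Icc (-(1 / 4)) (1 / 4)) :=
    fun r hr => hℓ1 r (abs_le.2 hr)
  have hρ : rho (rotateAt i p (t * α)) ∈ Set.Icc (-(1 / 4) : ℝ) (1 / 4) := by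
    rw [rho_rotateAt]; exact ⟨by linarith [rho_nonneg p], hp⟩
  have hℓ' := hasDerivAt_zero_of_eqOn_Icc (by norm_num) hρ (hℓ.differentiable one_ne_zero _) hflat
  rw [hamVF_of_hasFDerivAt (hasFDerivAt_mul_rhoI α i hℓ' (hflat hρ))]
  exact hasDerivAt_rotateAt i p α t
end

section
/- Let X : ℝ^m → ℝ^m be a C¹ vector field whose derivative is uniformly bounded by L < 1, i.e. ‖D_x X‖ ≤ L for all x ∈ ℝ^m (operator norm). Then X generates a complete flow φ^t, and for every x ∈ ℝ^m the derivative of the time-one map satisfies ‖D_x φ¹ − I‖ ≤ L/(1 − L). -/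
/-!
For a `K`-Lipschitz field the Picard operator is a contraction for the Bielecki norm
`sup_t e^{-κ|t|} ‖γ t - x₀‖` with `κ > K`, which gives global integral curves; their uniqueness
gives the group law.
The derivative `Ψ t` of `φ^t` at `x` solves the linearized equation `Ψ' = D X(φ^t x) ∘ Ψ`,
`Ψ 0 = 1`. If `M` is the maximum of `‖Ψ t - 1‖` over `t ∈ [0, 1]`, the mean value inequality gives
`M ≤ L (1 + M)`, i.e. `M ≤ L / (1 - L)`. The same maximum argument, applied to
`φ^t (x + h) - φ^t x - Ψ t h`, shows that `Ψ 1` is indeed the derivative of `φ¹` at `x`.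
-/

open Set Function Real
open scoped NNReal BoundedContinuousFunction

variable {E : Type*} [NormedAddCommGroup E] [NormedSpace ℝ E]

theorem norm_le_div_one_sub_of_norm_deriv_le {u u' : ℝ → E} {c L : ℝ} (hL0 : 0 ≤ L)
    (hL1 : L < 1) (hu : ∀ t ∈ Icc (0 : ℝ) 1, HasDerivWithinAt u (u' t) (Icc 0 1) t)
    (hu' : ∀ t ∈ Icc (0 : ℝ) 1, ‖u' t‖ ≤ c + L * ‖u t‖) :
    ∀ t ∈ Icc (0 : ℝ) 1, ‖u t‖ ≤ (‖u 0‖ + c) / (1 - L) := by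
  have hcont : ContinuousOn u (Icc 0 1) := fun t ht => (hu t ht).continuousWithinAt
  obtain ⟨t₀, ht₀, hmax⟩ := isCompact_Icc.exists_isMaxOn (nonempty_Icc.2 zero_le_one)
    hcont.norm
  set M := ‖u t₀‖
  have hc : 0 ≤ c + L * M := (norm_nonneg _).trans <| (hu' 0 (left_mem_Icc.2 zero_le_one)).trans
    (by gcongr; exact hmax (left_mem_Icc.2 zero_le_one))
  have hle : ∀ t ∈ Icc (0 : ℝ) 1, ‖u t‖ ≤ ‖u 0‖ + (c + L * M) := fun t ht =>
    calc ‖u t‖ ≤ ‖u 0‖ + ‖u t - u 0‖ := norm_le_insert' _ _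
      _ ≤ ‖u 0‖ + (c + L * M) * (t - 0) := by
          gcongr
          exact norm_image_sub_le_of_norm_deriv_le_segment' hu
            (fun s hs => (hu' s (Ico_subset_Icc_self hs)).trans
              (by gcongr; exact hmax (Ico_subset_Icc_self hs))) t ht
      _ ≤ ‖u 0‖ + (c + L * M) := by
          gcongr; exact mul_le_of_le_one_right hc (by linarith [ht.2])
  have hM : M ≤ (‖u 0‖ + c) / (1 - L) := by
    rw [le_div_iff₀ (by linarith)]; linarith [hle t₀ ht₀]
  exact fun t ht => (hmax ht).trans hM

theorem norm_sub_one_le_of_isIntegralCurve_comp {A Ψ : ℝ → E →L[ℝ] E} {K : ℝ≥0} (hK : K < 1)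
    (hAK : ∀ s, ‖A s‖ ≤ K) (hΨ0 : Ψ 0 = 1) (hΨ : IsIntegralCurve Ψ fun s U => (A s).comp U) :
    ∀ t ∈ Icc (0 : ℝ) 1, ‖Ψ t - 1‖ ≤ K / (1 - K) := by
  simpa [hΨ0] using norm_le_div_one_sub_of_norm_deriv_le (u := fun t => Ψ t - 1) K.coe_nonneg
    (mod_cast hK)
    (fun t _ => ((hΨ t).sub_const 1).hasDerivWithinAt) fun t _ =>
      calc ‖(A t).comp (Ψ t)‖ ≤ K * ‖Ψ t‖ := by
            refine (ContinuousLinearMap.opNorm_comp_le _ _).trans ?_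
            gcongr; exact hAK t
        _ ≤ K * (1 + ‖Ψ t - 1‖) := by
            gcongr
            exact (norm_le_insert' _ _).trans (by gcongr; exact ContinuousLinearMap.norm_id_le)
        _ = K + K * ‖Ψ t - 1‖ := by ring

theorem IsCompact.exists_forall_norm_sub_sub_fderiv_le {F : Type*} [NormedAddCommGroup F]
    [NormedSpace ℝ F] [ProperSpace E] {f : E → F} (hf : ContDiff ℝ 1 f) {S : Set E}
    (hS : IsCompact S) {ε : ℝ} (hε : 0 < ε) :
    ∃ δ > 0, ∀ y ∈ S, ∀ z, ‖z - y‖ < δ → ‖f z - f y - fderiv ℝ f y (z - y)‖ ≤ ε * ‖z - y‖ := by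
  have hunif := (hS.cthickening (r := 1)).uniformContinuousOn_of_continuous
    (hf.continuous_fderiv one_ne_zero).continuousOn
  obtain ⟨δ, hδ, hδf⟩ := Metric.uniformContinuousOn_iff.1 hunif ε hε
  refine ⟨min δ 1, by positivity, fun y hy z hz => ?_⟩
  have hball : ∀ w ∈ Metric.ball y (min δ 1), ‖fderiv ℝ f w - fderiv ℝ f y‖ ≤ ε := by
    intro w hw
    rw [Metric.mem_ball, lt_min_iff] at hw
    rw [← dist_eq_norm]
    exact (hδf w (Metric.mem_cthickening_of_dist_le _ _ _ _ hy hw.2.le) y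
      (Metric.self_subset_cthickening _ hy) hw.1).le
  exact (convex_ball y _).norm_image_sub_le_of_norm_fderiv_le'
    (fun w _ => (hf.differentiable one_ne_zero) w) hball (Metric.mem_ball_self (by positivity))
    (by rwa [Metric.mem_ball, dist_eq_norm])

/-- Bielecki coordinates: `z` bounded stands for the curve `x₀ + e^{κ|s|} z s` of at most
exponential growth. -/
noncomputable def bieleckiCurve (x₀ : E) (κ : ℝ) (z : ℝ → E) (s : ℝ) : E :=
  x₀ + exp (κ * |s|) • z s

/-- The Picard operator `γ ↦ x₀ + ∫₀ᵗ v s (γ s) ds` in Bielecki coordinates. -/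
noncomputable def bieleckiPicard (v : ℝ → E → E) (x₀ : E) (κ : ℝ) (z : ℝ → E) (t : ℝ) : E :=
  exp (-(κ * |t|)) • ∫ s in (0 : ℝ)..t, v s (bieleckiCurve x₀ κ z s)

theorem continuous_bieleckiCurve {x₀ : E} {κ : ℝ} {z : ℝ → E} (hz : Continuous z) :
    Continuous (bieleckiCurve x₀ κ z) :=
  continuous_const.add ((continuous_const.mul continuous_abs).rexp.smul hz)

theorem continuous_apply_bieleckiCurve {v : ℝ → E → E} {x₀ : E} {κ : ℝ} {z : ℝ → E}
    (hcont : Continuous (uncurry v)) (hz : Continuous z) :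
    Continuous fun s => v s (bieleckiCurve x₀ κ z s) :=
  hcont.comp (continuous_id.prodMk (continuous_bieleckiCurve hz))

theorem continuous_bieleckiPicard {v : ℝ → E → E} {x₀ : E} {κ : ℝ} {z : ℝ → E}
    (hcont : Continuous (uncurry v)) (hz : Continuous z) :
    Continuous (bieleckiPicard v x₀ κ z) :=
  (continuous_const.mul continuous_abs).neg.rexp.smul <| intervalIntegral.continuous_primitive
    (fun _ _ => (continuous_apply_bieleckiCurve hcont hz).intervalIntegrable _ _) 0

open scoped Classical in
-- junk value `x` when there is no global integral curve through `x`
noncomputable def flow (X : E → E) (t : ℝ) (x : E) : E :=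
  if h : ∃ γ : ℝ → E, γ 0 = x ∧ IsIntegralCurve γ fun _ => X then h.choose t else x

section Complete

variable [CompleteSpace E]

theorem norm_integral_le_div_mul_exp_abs {f : ℝ → E} (hf : Continuous f) {C κ : ℝ}
    (hκ : 0 < κ) (hbd : ∀ s, ‖f s‖ ≤ C * exp (κ * |s|)) (t : ℝ) :
    ‖∫ s in (0 : ℝ)..t, f s‖ ≤ C / κ * exp (κ * |t|) := by
  have hC : 0 ≤ C := nonneg_of_mul_nonneg_left ((norm_nonneg _).trans (hbd 0)) (exp_pos _)
  -- for `t ≥ 0`, compare with the solution `C / κ * exp (κ t)` of the majorant equation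
  have forward : ∀ g : ℝ → E, Continuous g → (∀ s, ‖g s‖ ≤ C * exp (κ * |s|)) →
      ∀ t, 0 ≤ t → ‖∫ s in (0 : ℝ)..t, g s‖ ≤ C / κ * exp (κ * t) := fun g hg hgb t ht =>
    image_norm_le_of_norm_deriv_right_le_deriv_boundary (a := 0) (b := t)
      (fun s _ => (hg.integral_hasStrictDerivAt 0 s).hasDerivAt.continuousAt.continuousWithinAt)
      (fun s _ => (hg.integral_hasStrictDerivAt 0 s).hasDerivAt.hasDerivWithinAt)
      (by simp only [intervalIntegral.integral_same, norm_zero]; positivity)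
      (fun s => ((hasDerivAt_id s).const_mul κ |>.exp.const_mul (C / κ)))
      (fun s hs => (hgb s).trans_eq <| by
        rw [abs_of_nonneg hs.1, id]
        field_simp)
      ⟨ht, le_rfl⟩
  rcases le_total 0 t with ht | ht
  · simpa [abs_of_nonneg ht] using forward f hf hbd t ht
  · have := forward (fun s => f (-s)) (hf.comp continuous_neg) (fun s => by simpa using hbd (-s))
      (-t) (neg_nonneg.2 ht)
    rwa [intervalIntegral.integral_comp_neg, neg_neg, neg_zero, intervalIntegral.integral_symm,
      norm_neg, ← abs_of_nonpos ht] at this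

theorem norm_exp_neg_smul_integral_le {f : ℝ → E} (hf : Continuous f) {C κ : ℝ}
    (hκ : 0 < κ) (hbd : ∀ s, ‖f s‖ ≤ C * exp (κ * |s|)) (t : ℝ) :
    ‖exp (-(κ * |t|)) • ∫ s in (0 : ℝ)..t, f s‖ ≤ C / κ := by
  rw [norm_smul, norm_of_nonneg (exp_pos _).le]
  calc exp (-(κ * |t|)) * ‖∫ s in (0 : ℝ)..t, f s‖
      ≤ exp (-(κ * |t|)) * (C / κ * exp (κ * |t|)) :=
        mul_le_mul_of_nonneg_left (norm_integral_le_div_mul_exp_abs hf hκ hbd t) (exp_pos _).le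
    _ = C / κ := by rw [mul_left_comm, ← exp_add, neg_add_cancel, exp_zero, mul_one]

section Bielecki

variable {v : ℝ → E → E} {K : ℝ≥0} {x₀ : E} {κ : ℝ} {z w : ℝ → E}

theorem norm_bieleckiPicard_sub_le (hv : ∀ t, LipschitzWith K (v t))
    (hcont : Continuous (uncurry v)) (hκ : 0 < κ) (hz : Continuous z) (hw : Continuous w) {C : ℝ}
    (hzw : ∀ s, ‖z s - w s‖ ≤ C) (t : ℝ) :
    ‖bieleckiPicard v x₀ κ z t - bieleckiPicard v x₀ κ w t‖ ≤ K * C / κ := by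
  have hz' := continuous_apply_bieleckiCurve (x₀ := x₀) (κ := κ) hcont hz
  have hw' := continuous_apply_bieleckiCurve (x₀ := x₀) (κ := κ) hcont hw
  rw [bieleckiPicard, bieleckiPicard, ← smul_sub,
    ← intervalIntegral.integral_sub (hz'.intervalIntegrable _ _) (hw'.intervalIntegrable _ _)]
  refine norm_exp_neg_smul_integral_le (hz'.sub hw') hκ (fun s => ?_) t
  calc ‖v s (bieleckiCurve x₀ κ z s) - v s (bieleckiCurve x₀ κ w s)‖
      ≤ K * ‖bieleckiCurve x₀ κ z s - bieleckiCurve x₀ κ w s‖ := (hv s).norm_sub_le _ _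
    _ = K * (exp (κ * |s|) * ‖z s - w s‖) := by
        simp only [bieleckiCurve, add_sub_add_left_eq_sub, ← smul_sub, norm_smul,
          norm_of_nonneg (exp_pos _).le]
    _ ≤ K * (exp (κ * |s|) * C) := by gcongr; exact hzw s
    _ = K * C * exp (κ * |s|) := by ring

theorem norm_bieleckiPicard_le (hv : ∀ t, LipschitzWith K (v t))
    (hcont : Continuous (uncurry v)) (hκ : 0 < κ) {B : ℝ} (hB : ∀ t, ‖v t x₀‖ ≤ B)
    (hz : Continuous z) {C : ℝ} (hzC : ∀ s, ‖z s‖ ≤ C) (t : ℝ) :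
    ‖bieleckiPicard v x₀ κ z t‖ ≤ (B + K * C) / κ := by
  have h0 : ‖bieleckiPicard v x₀ κ (fun _ => 0) t‖ ≤ B / κ := by
    refine norm_exp_neg_smul_integral_le (continuous_apply_bieleckiCurve hcont continuous_const)
      hκ (fun s => ?_) t
    simpa [bieleckiCurve] using (hB s).trans (le_mul_of_one_le_right
      ((norm_nonneg _).trans (hB s)) (one_le_exp (by positivity)))
  calc _ ≤ ‖bieleckiPicard v x₀ κ z t - bieleckiPicard v x₀ κ (fun _ => 0) t‖
        + ‖bieleckiPicard v x₀ κ (fun _ => 0) t‖ := norm_le_norm_sub_add _ _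
    _ ≤ K * C / κ + B / κ := add_le_add (norm_bieleckiPicard_sub_le hv hcont hκ hz
        continuous_const (fun s => by rw [sub_zero]; exact hzC s) t) h0
    _ = (B + K * C) / κ := by ring

end Bielecki

theorem exists_isIntegralCurve_of_lipschitzWith {v : ℝ → E → E} {K : ℝ≥0}
    (hv : ∀ t, LipschitzWith K (v t)) (hcont : Continuous (uncurry v)) {x₀ : E}
    (hbdd : ∃ B, ∀ t, ‖v t x₀‖ ≤ B) : ∃ γ : ℝ → E, γ 0 = x₀ ∧ IsIntegralCurve γ v := by
  obtain ⟨B, hB⟩ := hbdd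
  set κ : ℝ := K + 1
  have hκ : 0 < κ := by positivity
  set picard : (ℝ →ᵇ E) → ℝ →ᵇ E := fun z =>
    .ofNormedAddCommGroup _ (continuous_bieleckiPicard hcont z.continuous) ((B + K * ‖z‖) / κ)
      (norm_bieleckiPicard_le hv hcont hκ hB z.continuous z.norm_coe_le_norm)
  have hcontr : ContractingWith (K / (K + 1)) picard := by
    refine ⟨(div_lt_one (by positivity)).2 (lt_add_one K), LipschitzWith.of_dist_le_mul
      fun z w => (BoundedContinuousFunction.dist_le (by positivity)).2 fun t => ?_⟩
    rw [dist_eq_norm]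
    refine (norm_bieleckiPicard_sub_le hv hcont hκ z.continuous w.continuous
      (fun s => (dist_eq_norm (z s) (w s)).symm.trans_le (z.dist_coe_le_dist s)) t).trans_eq ?_
    simp only [κ, NNReal.coe_div, NNReal.coe_add, NNReal.coe_one]; ring
  set z := ContractingWith.fixedPoint picard hcontr
  have hz : ∀ t, bieleckiPicard v x₀ κ z t = z t := fun t =>
    DFunLike.congr_fun (ContractingWith.fixedPoint_isFixedPt hcontr) t
  set γ := bieleckiCurve x₀ κ z
  have hγ : γ = fun t => x₀ + ∫ s in (0 : ℝ)..t, v s (γ s) := funext fun t => by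
    simp only [γ, bieleckiCurve, ← hz t, bieleckiPicard, smul_smul, ← exp_add, add_neg_cancel,
      exp_zero, one_smul]
  refine ⟨γ, by rw [hγ]; simp, fun t => ?_⟩
  have := (continuous_apply_bieleckiCurve (x₀ := x₀) (κ := κ) hcont z.continuous
    |>.integral_hasStrictDerivAt 0 t).hasDerivAt.const_add x₀
  rwa [← hγ] at this

theorem exists_isIntegralCurve_comp {A : ℝ → E →L[ℝ] E} (hA : Continuous A) {K : ℝ≥0}
    (hAK : ∀ s, ‖A s‖ ≤ K) :
    ∃ Ψ : ℝ → E →L[ℝ] E, Ψ 0 = 1 ∧ IsIntegralCurve Ψ fun s U => (A s).comp U := by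
  have hlip : ∀ s, LipschitzWith K fun U : E →L[ℝ] E => (A s).comp U := fun s =>
    LipschitzWith.of_dist_le_mul fun U V => by
      rw [dist_eq_norm, dist_eq_norm, ← ContinuousLinearMap.comp_sub]
      exact (ContinuousLinearMap.opNorm_comp_le _ _).trans (by gcongr; exact hAK s)
  have hcont : Continuous (uncurry fun s (U : E →L[ℝ] E) => (A s).comp U) :=
    (hA.comp continuous_fst).clm_comp continuous_snd
  exact exists_isIntegralCurve_of_lipschitzWith hlip hcont
    ⟨K, fun s => by rw [ContinuousLinearMap.one_def, ContinuousLinearMap.comp_id]; exact hAK s⟩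

section Flow

variable {X : E → E} {K : ℝ≥0}

theorem flow_spec (hX : LipschitzWith K X) (x : E) :
    flow X 0 x = x ∧ IsIntegralCurve (flow X · x) fun _ => X := by
  have h : ∃ γ : ℝ → E, γ 0 = x ∧ IsIntegralCurve γ fun _ => X :=
    exists_isIntegralCurve_of_lipschitzWith (fun _ => hX)
      (hX.continuous.comp continuous_snd) ⟨‖X x‖, fun _ => le_rfl⟩
  simpa only [flow, dif_pos h] using h.choose_spec

theorem flow_zero (hX : LipschitzWith K X) (x : E) : flow X 0 x = x := (flow_spec hX x).1

theorem isIntegralCurve_flow (hX : LipschitzWith K X) (x : E) :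
    IsIntegralCurve (flow X · x) fun _ => X := (flow_spec hX x).2

theorem flow_add (hX : LipschitzWith K X) (s t : ℝ) (x : E) :
    flow X (s + t) x = flow X s (flow X t x) := by
  have hshift : IsIntegralCurve (fun s => flow X (s + t) x) fun _ => X := fun s =>
    (isIntegralCurve_flow hX x (s + t)).comp_add_const s t
  have := ODE_solution_unique_univ (s := fun _ => univ) (t₀ := 0)
    (fun _ => hX.lipschitzOnWith) (fun s => ⟨hshift s, mem_univ _⟩)
    (fun s => ⟨isIntegralCurve_flow hX (flow X t x) s, mem_univ _⟩)
    (by rw [zero_add, flow_zero hX])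
  exact congrFun this s

theorem norm_flow_sub_flow_le (hX : LipschitzWith K X) (hK : K < 1) (a b : E) :
    ∀ t ∈ Icc (0 : ℝ) 1, ‖flow X t b - flow X t a‖ ≤ ‖b - a‖ / (1 - K) := by
  simpa [flow_zero hX] using norm_le_div_one_sub_of_norm_deriv_le (c := 0) K.coe_nonneg
    (mod_cast hK)
    (fun t _ => ((isIntegralCurve_flow hX b t).sub (isIntegralCurve_flow hX a t)).hasDerivWithinAt)
    (fun t _ => by simpa using hX.norm_sub_le (flow X t b) (flow X t a))

theorem norm_flow_sub_flow_sub_le (hX : LipschitzWith K X) (hK : K < 1)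
    {A Ψ : ℝ → E →L[ℝ] E} (hAK : ∀ s, ‖A s‖ ≤ K) (hΨ0 : Ψ 0 = 1)
    (hΨ : IsIntegralCurve Ψ fun s U => (A s).comp U) {x h : E} {ε : ℝ}
    (hrem : ∀ s ∈ Icc (0 : ℝ) 1,
      ‖X (flow X s (x + h)) - X (flow X s x) - A s (flow X s (x + h) - flow X s x)‖ ≤ ε) :
    ‖flow X 1 (x + h) - flow X 1 x - Ψ 1 h‖ ≤ ε / (1 - K) := by
  set u := fun t => flow X t (x + h) - flow X t x - Ψ t h
  set u' := fun t => X (flow X t (x + h)) - X (flow X t x) - (A t).comp (Ψ t) h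
  have hu : ∀ t, HasDerivAt u (u' t) t := fun t =>
    ((isIntegralCurve_flow hX (x + h) t).sub (isIntegralCurve_flow hX x t)).sub
      (by simpa using (hΨ t).clm_apply (hasDerivAt_const t h))
  have hu' : ∀ t ∈ Icc (0 : ℝ) 1, ‖u' t‖ ≤ ε + K * ‖u t‖ := fun t ht => by
    have hsplit : u' t = (X (flow X t (x + h)) - X (flow X t x)
        - A t (flow X t (x + h) - flow X t x)) + A t (u t) := by
      simp only [u, u', map_sub, ContinuousLinearMap.comp_apply]; abel
    rw [hsplit]
    exact (norm_add_le _ _).trans (add_le_add (hrem t ht) ((A t).le_of_opNorm_le (hAK t) (u t)))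
  have hu0 : u 0 = 0 := by simp [u, flow_zero hX, hΨ0]
  simpa [hu0] using norm_le_div_one_sub_of_norm_deriv_le K.coe_nonneg (mod_cast hK)
    (fun t _ => (hu t).hasDerivWithinAt) hu' 1 (right_mem_Icc.2 zero_le_one)

end Flow

end Complete

theorem hasFDerivAt_flow_one [FiniteDimensional ℝ E] {X : E → E} {K : ℝ≥0}
    (hX : ContDiff ℝ 1 X) (hDX : ∀ y, ‖fderiv ℝ X y‖ ≤ K) (hK : K < 1) {x : E}
    {Ψ : ℝ → E →L[ℝ] E} (hΨ0 : Ψ 0 = 1)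
    (hΨ : IsIntegralCurve Ψ fun s U => (fderiv ℝ X (flow X s x)).comp U) :
    HasFDerivAt (flow X 1) (Ψ 1) x := by
  have hLip : LipschitzWith K X :=
    lipschitzWith_of_nnnorm_fderiv_le (hX.differentiable one_ne_zero) fun y => hDX y
  have hK1 : (0 : ℝ) < 1 - K := sub_pos.2 (mod_cast hK)
  rw [hasFDerivAt_iff_isLittleO_nhds_zero, Asymptotics.isLittleO_iff]
  intro c hc
  obtain ⟨δ, hδ, hunif⟩ := (isCompact_Icc.image (isIntegralCurve_flow hLip x).continuous)
    |>.exists_forall_norm_sub_sub_fderiv_le hX (ε := c * (1 - K) ^ 2) (by positivity)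
  filter_upwards [Metric.ball_mem_nhds (0 : E) (mul_pos hδ hK1)] with h hh
  rw [mem_ball_zero_iff] at hh
  have hclose : ∀ s ∈ Icc (0 : ℝ) 1, ‖flow X s (x + h) - flow X s x‖ ≤ ‖h‖ / (1 - K) := by
    simpa using norm_flow_sub_flow_le hLip hK x (x + h)
  refine (norm_flow_sub_flow_sub_le hLip hK (fun s => hDX _) hΨ0 hΨ fun s hs => ?_).trans_eq
    (mul_div_cancel_right₀ _ hK1.ne')
  calc _ ≤ c * (1 - K) ^ 2 * ‖flow X s (x + h) - flow X s x‖ :=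
        hunif _ (mem_image_of_mem _ hs) _ <| (hclose s hs).trans_lt <| by rwa [div_lt_iff₀ hK1]
    _ ≤ c * (1 - K) ^ 2 * (‖h‖ / (1 - K)) := by gcongr; exact hclose s hs
    _ = c * ‖h‖ * (1 - K) := by field_simp

/-- a `C¹` vector field on `ℝ^m` whose derivative is uniformly bounded by
`L < 1` generates a complete flow, and the derivative of the time-one map satisfies
`‖D φ¹ - I‖ ≤ L/(1-L)`. -/
theorem stmt_8 (m : ℕ) (X : (Fin m → ℝ) → (Fin m → ℝ)) (hX : ContDiff ℝ 1 X)
    (L : ℝ) (hL1 : L < 1) (hDX : ∀ x, ‖fderiv ℝ X x‖ ≤ L) :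
    ∃ φ : ℝ → (Fin m → ℝ) → (Fin m → ℝ),
      (∀ x, φ 0 x = x) ∧
      (∀ s t x, φ (s + t) x = φ s (φ t x)) ∧
      (∀ x t, HasDerivAt (fun s => φ s x) (X (φ t x)) t) ∧
      (∀ x, ∃ D : (Fin m → ℝ) →L[ℝ] (Fin m → ℝ),
        HasFDerivAt (φ 1) D x ∧
        ‖D - ContinuousLinearMap.id ℝ (Fin m → ℝ)‖ ≤ L / (1 - L)) := by
  lift L to ℝ≥0 using (norm_nonneg _).trans (hDX 0)
  have hLip : LipschitzWith L X :=
    lipschitzWith_of_nnnorm_fderiv_le (hX.differentiable one_ne_zero) fun y => hDX y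
  have hL : L < 1 := mod_cast hL1
  refine ⟨flow X, flow_zero hLip, flow_add hLip, fun x => isIntegralCurve_flow hLip x, fun x => ?_⟩
  obtain ⟨Ψ, hΨ0, hΨ⟩ := exists_isIntegralCurve_comp
    ((hX.continuous_fderiv one_ne_zero).comp (isIntegralCurve_flow hLip x).continuous)
    fun s => hDX (flow X s x)
  exact ⟨Ψ 1, hasFDerivAt_flow_one hX hDX hL hΨ0 hΨ,
    norm_sub_one_le_of_isIntegralCurve_comp hL (fun s => hDX _) hΨ0 hΨ 1 ⟨zero_le_one, le_rfl⟩⟩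
end

section
/- Let η > 0 and θ, ξ ∈ (0, π/2) satisfy cos ξ = ((η + η⁻¹)/2) cos θ. Define P = (η⁻¹ sin θ sin ξ)^{−1/2} · [[η⁻¹ sin θ, 0],[cos ξ − η cos θ, sin ξ]]. Then det P = 1 and R_θ⁻¹ · diag(η, η⁻¹) = P R_{−ξ} P⁻¹; that is, the matrix [[η cos θ, η⁻¹ sin θ],[−η sin θ, η⁻¹ cos θ]] is conjugate, by a determinant-one matrix, to the rotation by angle −ξ. -/
/-!
Since `R_θ⁻¹ = R_{-θ}`, the left side is an explicit matrix `A`, and the conjugacy amounts to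
`A M = M R_{-ξ}` for the unnormalised conjugator `M = √(det M) • P`. Entrywise, after
`sin² + cos² = 1`, the two nontrivial entries are multiples of `2 cos ξ - (η + η⁻¹) cos θ = 0`.
As `det M = η⁻¹ sin θ sin ξ > 0`, dividing by `√(det M)` makes the conjugator unimodular.
-/

open Matrix Real

noncomputable def Rmat (β : ℝ) : Matrix (Fin 2) (Fin 2) ℝ :=
  !![Real.cos β, -Real.sin β; Real.sin β, Real.cos β]

lemma Rmat_neg_mul_Rmat (β : ℝ) : Rmat (-β) * Rmat β = 1 := by
  ext i j
  fin_cases i <;> fin_cases j <;> simp [Rmat, cos_neg, sin_neg]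
  · linear_combination cos_sq_add_sin_sq β
  · ring
  · ring
  · linear_combination sin_sq_add_cos_sq β

lemma Rmat_inv (β : ℝ) : (Rmat β)⁻¹ = Rmat (-β) :=
  inv_eq_left_inv (Rmat_neg_mul_Rmat β)

lemma Rmat_neg_mul_diagonal (η β : ℝ) :
    Rmat (-β) * diagonal ![η, η⁻¹] =
      !![η * cos β, η⁻¹ * sin β; -(η * sin β), η⁻¹ * cos β] := by
  ext i j
  fin_cases i <;> fin_cases j <;> simp [Rmat, cos_neg, sin_neg, mul_comm]

lemma det_inv_sqrt_det_smul (M : Matrix (Fin 2) (Fin 2) ℝ) (h : 0 < M.det) :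
    ((√M.det)⁻¹ • M).det = 1 := by
  rw [det_smul, Fintype.card_fin, inv_pow, sq_sqrt h.le, inv_mul_cancel₀ h.ne']

lemma eq_smul_mul_mul_inv_of_mul_eq {n R : Type*} [Fintype n] [DecidableEq n] [CommRing R]
    {A B M : Matrix n n R} (c : R) (hdet : IsUnit (c • M).det) (h : A * M = M * B) :
    A = c • M * B * (c • M)⁻¹ := by
  rw [smul_mul, ← h, ← mul_smul_comm, mul_nonsing_inv_cancel_right _ _ hdet]

lemma mul_eq_mul_Rmat_neg {η θ ξ : ℝ} (hη : η ≠ 0)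
    (hcos : cos ξ = ((η + η⁻¹) / 2) * cos θ) :
    !![η * cos θ, η⁻¹ * sin θ; -(η * sin θ), η⁻¹ * cos θ] *
        !![η⁻¹ * sin θ, 0; cos ξ - η * cos θ, sin ξ] =
      !![η⁻¹ * sin θ, 0; cos ξ - η * cos θ, sin ξ] * Rmat (-ξ) := by
  have hηη : η * η⁻¹ = 1 := mul_inv_cancel₀ hη
  ext i j
  fin_cases i <;> fin_cases j <;> simp [Rmat, cos_neg, sin_neg]
  · ring
  · linear_combination (-(sin θ ^ 2 + cos θ ^ 2)) * hηη - 2 * cos ξ * hcos -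
      sin_sq_add_cos_sq θ + sin_sq_add_cos_sq ξ
  · linear_combination -2 * sin ξ * hcos

/-- `R_θ⁻¹ · diag(η, η⁻¹)` is conjugate, by the explicit determinant-one
matrix `P`, to the rotation by angle `-ξ`, where `cos ξ = ((η+η⁻¹)/2) cos θ`. -/
theorem stmt_12 (η θ ξ : ℝ) (hη : 0 < η)
    (hθ : θ ∈ Set.Ioo 0 (Real.pi / 2)) (hξ : ξ ∈ Set.Ioo 0 (Real.pi / 2))
    (hcos : Real.cos ξ = ((η + η⁻¹) / 2) * Real.cos θ)
    (P : Matrix (Fin 2) (Fin 2) ℝ)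
    (hP : P = (Real.sqrt (η⁻¹ * Real.sin θ * Real.sin ξ))⁻¹ •
      !![η⁻¹ * Real.sin θ, 0; Real.cos ξ - η * Real.cos θ, Real.sin ξ]) :
    P.det = 1 ∧
    (Rmat θ)⁻¹ * Matrix.diagonal ![η, η⁻¹] =
      !![η * Real.cos θ, η⁻¹ * Real.sin θ; -(η * Real.sin θ), η⁻¹ * Real.cos θ] ∧
    (Rmat θ)⁻¹ * Matrix.diagonal ![η, η⁻¹] = P * Rmat (-ξ) * P⁻¹ := by
  have hsinθ : 0 < sin θ := sin_pos_of_pos_of_lt_pi hθ.1 (by linarith [hθ.2, pi_pos])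
  have hsinξ : 0 < sin ξ := sin_pos_of_pos_of_lt_pi hξ.1 (by linarith [hξ.2, pi_pos])
  have hdetM : (!![η⁻¹ * sin θ, 0; cos ξ - η * cos θ, sin ξ]).det = η⁻¹ * sin θ * sin ξ := by
    simp [det_fin_two_of, mul_assoc]
  have hdetP : P.det = 1 := by
    rw [hP, ← hdetM]
    exact det_inv_sqrt_det_smul _ (hdetM ▸ by positivity)
  have hA := Rmat_inv θ ▸ Rmat_neg_mul_diagonal η θ
  refine ⟨hdetP, hA, ?_⟩
  rw [hA, hP]
  exact eq_smul_mul_mul_inv_of_mul_eq _ (hP ▸ hdetP ▸ isUnit_one)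
    (mul_eq_mul_Rmat_neg hη.ne' hcos)
end
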